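/- For all real q > -1/4, the sequence F_{n+1}(q)/F_n(q) converges as n → ∞ to (1 + sqrt(1 + 4q))/2. -/

import Mathlib

/-!
With `φ, ψ = (1 ± √(1 + 4q)) / 2` the roots of `x² = x + q`, Binet's formula
`F_n = (φ^(n+1) - ψ^(n+1)) / (φ - ψ)` holds. For `q > -1/4` the roots are real with `|ψ| < φ`,
which makes every `F_n` positive, and dividing by `φ^n` shows that the ratio of consecutive terms
`(φ^(n+1) - ψ^(n+1)) / (φ^n - ψ^n)` tends to `φ`.
-/

open Filter Topology

noncomputable def qFibR (q : ℝ) : ℕ → ℝ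
  | 0 => 1
  | 1 => 1
  | n + 2 => qFibR q (n + 1) + q * qFibR q n

theorem qFibR_mul_sub {q φ ψ : ℝ} (hsum : φ + ψ = 1) (hprod : φ * ψ = -q) (n : ℕ) :
    qFibR q n * (φ - ψ) = φ ^ (n + 1) - ψ ^ (n + 1) := by
  induction n using Nat.twoStepInduction with
  | zero => simp [qFibR]
  | one => simp only [qFibR]; linear_combination (ψ - φ) * hsum
  | more n ih ih' =>
    simp only [qFibR]
    linear_combination ih' + q * ih + (ψ ^ (n + 2) - φ ^ (n + 2)) * hsum
      + (φ ^ (n + 1) - ψ ^ (n + 1)) * hprod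

theorem pow_sub_pow_pos_of_abs_lt {φ ψ : ℝ} (h : |ψ| < φ) {n : ℕ} (hn : n ≠ 0) :
    0 < φ ^ n - ψ ^ n :=
  sub_pos.2 <| (le_abs_self _).trans_lt <|
    (abs_pow ψ n).trans_lt (pow_lt_pow_left₀ h (abs_nonneg ψ) hn)

theorem tendsto_pow_succ_sub_pow_succ_div_pow_sub_pow {φ ψ : ℝ} (h : |ψ| < φ) :
    Tendsto (fun n : ℕ => (φ ^ (n + 1) - ψ ^ (n + 1)) / (φ ^ n - ψ ^ n)) atTop (𝓝 φ) := by
  have hφ : 0 < φ := (abs_nonneg ψ).trans_lt h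
  have hr : |ψ / φ| < 1 := by rwa [abs_div, abs_of_pos hφ, div_lt_one hφ]
  have hpow := tendsto_pow_atTop_nhds_zero_of_abs_lt_one hr
  have hlim : Tendsto (fun n : ℕ => (φ - ψ * (ψ / φ) ^ n) / (1 - (ψ / φ) ^ n)) atTop
      (𝓝 ((φ - ψ * 0) / (1 - 0))) :=
    (tendsto_const_nhds.sub (hpow.const_mul ψ)).div (tendsto_const_nhds.sub hpow) (by norm_num)
  rw [mul_zero, sub_zero, sub_zero, div_one] at hlim
  refine hlim.congr fun n => ?_
  have hφn : φ ^ n ≠ 0 := pow_ne_zero n hφ.ne'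
  rw [← mul_div_mul_left _ _ hφn]
  have hscale (a : ℝ) : φ ^ n * (a * (ψ / φ) ^ n) = a * ψ ^ n := by
    rw [div_pow, mul_div_assoc', mul_div_assoc', mul_div_cancel_left₀ _ hφn]
  congr 1
  · rw [mul_sub, hscale]; ring
  · rw [mul_sub, mul_one, ← one_mul ((ψ / φ) ^ n), hscale, one_mul]

theorem qFib_ratio_tendsto_golden (q : ℝ) (hq : -1/4 < q) :
    (∀ n, 0 < qFibR q n) ∧
      Filter.Tendsto (fun n => qFibR q (n + 1) / qFibR q n) Filter.atTop
        (nhds ((1 + Real.sqrt (1 + 4 * q)) / 2)) := by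
  set s := Real.sqrt (1 + 4 * q)
  have hs : 0 < s := Real.sqrt_pos.2 (by linarith)
  have hs2 : s ^ 2 = 1 + 4 * q := Real.sq_sqrt (by linarith)
  set φ := (1 + s) / 2 with hφ
  set ψ := (1 - s) / 2 with hψ
  have hdom : |ψ| < φ := abs_lt.2 ⟨by linarith, by linarith⟩
  have binet (n : ℕ) : qFibR q n = (φ ^ (n + 1) - ψ ^ (n + 1)) / s := by
    rw [eq_div_iff hs.ne', ← qFibR_mul_sub (q := q) (by ring) (by linear_combination -hs2 / 4)]
    ring
  refine ⟨fun n => binet n ▸ div_pos (pow_sub_pow_pos_of_abs_lt hdom n.succ_ne_zero) hs, ?_⟩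
  simp_rw [binet, div_div_div_cancel_right₀ hs.ne']
  exact (tendsto_pow_succ_sub_pow_succ_div_pow_sub_pow hdom).comp (tendsto_add_atTop_nat 1)
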